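/- arXiv:math/9808082 — 6 statements merged into one kernel-verified Lean document; each statement's English description precedes it below -/
import Mathlib

section
/- Fix an integer n ≥ 1 and define a : ℕ → ℕ by a 0 = 1, a 1 = 1, and for k ≥ 2, a k = n·a(k−1) + (n−1)·∑_{i=2}^{k−1} a(i)·a(k−i). Then the sequence of real ratios r k = a(k+1)/a(k) (k ≥ 1) is nondecreasing and converges to 2n − 1 + 2·√(n² − n). -/
/-!
With `m = n - 1`, the convolution in the recurrence is the square of the generating function
`A = ∑ aₖ Xᵏ`, so `m A² - (2m + 1 - X) A + (m + 1) = 0`. Differentiating, and multiplying by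
`S = 2mA - (2m + 1) + X`, whose square is the discriminant `X² - 2qX + 1` (`q = 2n - 1`), gives a
first-order linear ODE for `A`, hence the three-term recursion
`(j + 3) a (j + 3) = q (2j + 3) a (j + 2) - j a (j + 1)`.
For `n ≥ 2` let `L = q + √(q² - 1)`, the larger root of `L² - 2qL + 1 = 0`. The recursion
propagates the bounds `L (2k - 1) / (2k + 2) ≤ a (k + 1) / a k ≤ L (2k + 1) / (2k + 4)`;
the upper bound at `k` is the lower bound at `k + 1`, which gives monotonicity, and both bounds
tend to `L`.
For `n = 1` the sequence is constant.
-/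

open Finset Filter Topology PowerSeries

theorem Finset.Nat.sum_antidiagonal_succ_eq_add_sum_Ico {M : Type*} [AddCommMonoid M]
    (f : ℕ → ℕ → M) (k : ℕ) :
    ∑ p ∈ antidiagonal (k + 1), f p.1 p.2
      = f 0 (k + 1) + f (k + 1) 0 + ∑ i ∈ Ico 1 (k + 1), f i (k + 1 - i) := by
  rw [Nat.sum_antidiagonal_eq_sum_range_succ f, sum_range_succ, range_eq_Ico,
    sum_eq_sum_Ico_succ_bot (Nat.succ_pos k), Nat.sub_self, Nat.sub_zero]
  abel

namespace PowerSeries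

variable {R : Type*} [CommRing R] {m : R}

theorem quadratic_mk_of_convolution_recurrence {b : ℕ → R} (h0 : b 0 = 1)
    (hrec : ∀ k, 1 ≤ k → b k = b (k - 1) + m * ∑ i ∈ Ico 1 k, b i * b (k - i)) :
    C m * mk b ^ 2 - (2 * C m + 1 - X) * mk b + (C m + 1) = 0 := by
  rw [show (2 : R⟦X⟧) = C 2 from (map_ofNat C 2).symm]
  ext (_ | k)
  · simp only [pow_two, sub_mul, add_mul, one_mul, coeff_zero_eq_constantCoeff, map_add, map_sub,
      map_mul, constantCoeff_C, constantCoeff_mk, h0, mul_one, constantCoeff_X, sub_zero,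
      constantCoeff_one, constantCoeff_zero]
    ring
  · have hk := hrec (k + 1) k.succ_pos
    simp only [pow_two, sub_mul, add_mul, mul_assoc, map_add, map_sub, coeff_C_mul, one_mul,
      coeff_succ_X_mul, coeff_mk, coeff_C, Nat.add_sub_cancel, Nat.succ_ne_zero, if_false] at hk ⊢
    rw [coeff_mul,
      Finset.Nat.sum_antidiagonal_succ_eq_add_sum_Ico (fun i j => coeff i (mk b) * coeff j (mk b))]
    simp only [coeff_mk, coeff_one, h0, map_zero, Nat.succ_ne_zero, if_false]
    linear_combination -hk

theorem linear_ode_of_quadratic {A : R⟦X⟧}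
    (hA : C m * A ^ 2 - (2 * C m + 1 - X) * A + (C m + 1) = 0) :
    (X ^ 2 - 2 * (2 * C m + 1) * X + 1) * d⁄dX R A + (2 * C m + 1 - X) * A
      = 2 * (C m + 1) := by
  have hA' := congrArg (d⁄dX R) hA
  have h2 : d⁄dX R (2 : R⟦X⟧) = 0 := by exact_mod_cast (d⁄dX R).map_natCast 2
  simp only [map_add, map_sub, Derivation.leibniz, Derivation.leibniz_pow, derivative_C,
    derivative_X, Derivation.map_one_eq_zero, h2, smul_eq_mul, map_zero] at hA'
  -- `hA'` is `S * A' + A = 0` for `S = 2mA - (2m + 1) + X`, and `S²` differs from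
  -- `X² - 2(2m + 1)X + 1` by `4m` times the left side of `hA`
  linear_combination (-2 - 4 * C m * d⁄dX R A) * hA + (2 * C m * A - (2 * C m + 1) + X) * hA'

theorem coeff_three_term_recurrence_of_quadratic {A : R⟦X⟧}
    (hA : C m * A ^ 2 - (2 * C m + 1 - X) * A + (C m + 1) = 0) (j : ℕ) :
    ((j : R) + 3) * coeff (j + 3) A
      = (2 * m + 1) * (2 * j + 3) * coeff (j + 2) A - j * coeff (j + 1) A := by
  have h := congrArg (coeff (j + 2)) (linear_ode_of_quadratic hA)
  rw [show (2 : R⟦X⟧) = C 2 from (map_ofNat C 2).symm] at h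
  simp only [pow_two, mul_add, mul_one, add_mul, mul_assoc, sub_mul, one_mul, map_add, map_sub,
    coeff_succ_X_mul, coeff_derivative, coeff_C_mul, Nat.cast_add, Nat.cast_one, Nat.cast_ofNat,
    coeff_mul_C, coeff_succ_C, zero_mul, add_zero] at h
  linear_combination h

end PowerSeries

section ObjectCount

variable {n : ℕ} {a : ℕ → ℕ}

theorem cast_convolution_recurrence {R : Type*} [CommRing R] (hn : 1 ≤ n) (h0 : a 0 = 1)
    (h1 : a 1 = 1) (hrec : ∀ k, 2 ≤ k →
      a k = n * a (k - 1) + (n - 1) * ∑ i ∈ Finset.Icc 2 (k - 1), a i * a (k - i))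
    (k : ℕ) (hk : 1 ≤ k) :
    (a k : R) = a (k - 1) + ((n : R) - 1) * ∑ i ∈ Ico 1 k, (a i : R) * a (k - i) := by
  obtain rfl | ⟨j, rfl⟩ : k = 1 ∨ ∃ j, k = j + 2 := by
    rcases k with _ | _ | j <;> simp_all
  · simp [h0, h1]
  · have hsplit : ∑ i ∈ Ico 1 (j + 2), (a i : R) * a (j + 2 - i)
        = a (j + 1) + ∑ i ∈ Icc 2 (j + 1), (a i : R) * a (j + 2 - i) := by
      rw [sum_eq_sum_Ico_succ_bot (by omega), ← Ico_add_one_right_eq_Icc, h1, Nat.cast_one,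
        one_mul]
      rfl
    rw [hsplit, hrec (j + 2) (by omega)]
    push_cast [Nat.cast_sub hn]
    ring

theorem three_term_recurrence {R : Type*} [CommRing R] (hn : 1 ≤ n) (h0 : a 0 = 1)
    (h1 : a 1 = 1) (hrec : ∀ k, 2 ≤ k →
      a k = n * a (k - 1) + (n - 1) * ∑ i ∈ Finset.Icc 2 (k - 1), a i * a (k - i))
    (j : ℕ) :
    ((j : R) + 3) * a (j + 3) = (2 * n - 1) * (2 * j + 3) * a (j + 2) - j * a (j + 1) := by
  have hquad := quadratic_mk_of_convolution_recurrence (b := fun k => (a k : R)) (by simp [h0])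
    (cast_convolution_recurrence hn h0 h1 hrec)
  have h := coeff_three_term_recurrence_of_quadratic hquad j
  simp only [coeff_mk] at h
  linear_combination h

theorem pos_of_recurrence (hn : 1 ≤ n) (h0 : a 0 = 1) (h1 : a 1 = 1) (hrec : ∀ k, 2 ≤ k →
      a k = n * a (k - 1) + (n - 1) * ∑ i ∈ Finset.Icc 2 (k - 1), a i * a (k - i))
    (k : ℕ) : 0 < a k := by
  induction k with
  | zero => simp [h0]
  | succ k ih =>
    rcases k with _ | k
    · simp [h1]
    · have := hrec (k + 2) (by omega)
      rw [show k + 2 - 1 = k + 1 from rfl] at this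
      show 0 < a (k + 2)
      have : a (k + 1) ≤ n * a (k + 1) := Nat.le_mul_of_pos_left _ hn
      omega

end ObjectCount

section ThreeTermRecurrence

variable {q L : ℝ} {b : ℕ → ℝ}

theorem lower_bound_of_three_term_recurrence (hL : L ^ 2 + 1 = 2 * q * L) (hL0 : 0 < L)
    (hrec : ∀ j : ℕ, ((j : ℝ) + 3) * b (j + 3) = q * (2 * j + 3) * b (j + 2) - j * b (j + 1))
    (hb : ∀ k, 0 ≤ b k) (hbase : L * b 1 ≤ 4 * b 2) (j : ℕ) :
    L * (2 * j + 1) * b (j + 1) ≤ (2 * j + 4) * b (j + 2) := by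
  induction j with
  | zero => simpa using hbase
  | succ j ih =>
    push_cast
    refine le_of_mul_le_mul_left ?_ (by positivity : 0 < L * (2 * j + 1))
    calc L * (2 * j + 1) * (L * (2 * (j + 1) + 1) * b (j + 2))
        ≤ (L ^ 2 + 1) * (2 * j + 1) * (2 * j + 3) * b (j + 2)
            - 2 * j * ((2 * j + 4) * b (j + 2)) := by nlinarith [hb (j + 2)]
      _ ≤ (L ^ 2 + 1) * (2 * j + 1) * (2 * j + 3) * b (j + 2)
            - 2 * j * (L * (2 * j + 1) * b (j + 1)) := by gcongr
      _ = L * (2 * j + 1) * ((2 * (j + 1) + 4) * b (j + 3)) := by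
        linear_combination
          (-2 * L * (2 * j + 1)) * hrec j + (2 * j + 1) * (2 * j + 3) * b (j + 2) * hL

theorem upper_bound_of_three_term_recurrence (hL : L ^ 2 + 1 = 2 * q * L) (hL2 : 2 ≤ L)
    (hrec : ∀ j : ℕ, ((j : ℝ) + 3) * b (j + 3) = q * (2 * j + 3) * b (j + 2) - j * b (j + 1))
    (hb : ∀ k, 0 ≤ b k) (hbase : 6 * b 2 ≤ L * 3 * b 1) (j : ℕ) :
    (2 * j + 6) * b (j + 2) ≤ L * (2 * j + 3) * b (j + 1) := by
  induction j with
  | zero => simpa using hbase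
  | succ j ih =>
    push_cast
    refine le_of_mul_le_mul_left ?_ (by positivity : 0 < L * (2 * j + 3) * (2 * j + 6))
    calc L * (2 * j + 3) * (2 * j + 6) * ((2 * (j + 1) + 6) * b (j + 3))
        = (2 * j + 8) * ((L ^ 2 + 1) * (2 * j + 3) ^ 2 * b (j + 2)
            - 2 * j * (L * (2 * j + 3) * b (j + 1))) := by
          linear_combination (2 * L * (2 * j + 3) * (2 * j + 8)) * hrec j
            - (2 * j + 3) ^ 2 * (2 * j + 8) * b (j + 2) * hL
      _ ≤ (2 * j + 8) * ((L ^ 2 + 1) * (2 * j + 3) ^ 2 * b (j + 2)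
            - 2 * j * ((2 * j + 6) * b (j + 2))) := by gcongr
      _ ≤ L * (2 * j + 3) * (2 * j + 6) * (L * (2 * (j + 1) + 3) * b (j + 2)) := by
        -- the difference is `(6 (L² - 4) (2j + 3) + 30j) * b (j + 2)`
        have hL4 : 0 ≤ b (j + 2) * (L ^ 2 - 4) := mul_nonneg (hb _) (by nlinarith)
        nlinarith [mul_nonneg j.cast_nonneg hL4, mul_nonneg j.cast_nonneg (hb (j + 2))]

theorem tendsto_mul_two_mul_add_div_two_mul_add (L c d : ℝ) :
    Tendsto (fun j : ℕ => L * (2 * j + c) / (2 * j + d)) atTop (𝓝 L) := by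
  have h := tendsto_add_mul_div_add_mul_atTop_nhds (L * c) d (2 * L) (two_ne_zero (α := ℝ))
  rw [mul_div_cancel_left₀ L two_ne_zero] at h
  exact h.congr fun j => by ring

theorem ratio_monotone_and_tendsto (hL : L ^ 2 + 1 = 2 * q * L) (hL2 : 2 ≤ L)
    (hrec : ∀ j : ℕ, ((j : ℝ) + 3) * b (j + 3) = q * (2 * j + 3) * b (j + 2) - j * b (j + 1))
    (hb : ∀ k, 0 < b k) (hlow : L * b 1 ≤ 4 * b 2) (hup : 6 * b 2 ≤ L * 3 * b 1) :
    (∀ k, 1 ≤ k → b (k + 1) / b k ≤ b (k + 2) / b (k + 1)) ∧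
      Tendsto (fun k => b (k + 1) / b k) atTop (𝓝 L) := by
  have lower (j : ℕ) : L * (2 * j + 1) / (2 * j + 4) ≤ b (j + 2) / b (j + 1) := by
    rw [div_le_div_iff₀ (by positivity) (hb _), mul_comm (b (j + 2))]
    exact lower_bound_of_three_term_recurrence hL (by linarith) hrec (fun k => (hb k).le) hlow j
  have upper (j : ℕ) : b (j + 2) / b (j + 1) ≤ L * (2 * j + 3) / (2 * j + 6) := by
    rw [div_le_div_iff₀ (hb _) (by positivity), mul_comm (b (j + 2))]
    exact upper_bound_of_three_term_recurrence hL hL2 hrec (fun k => (hb k).le) hup j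
  refine ⟨fun k hk => ?_, ?_⟩
  · obtain ⟨j, rfl⟩ := Nat.exists_eq_add_of_le' hk
    calc b (j + 2) / b (j + 1) ≤ L * (2 * j + 3) / (2 * j + 6) := upper j
      _ = L * (2 * (j + 1 : ℕ) + 1) / (2 * (j + 1 : ℕ) + 4) := by push_cast; ring_nf
      _ ≤ b (j + 1 + 2) / b (j + 1 + 1) := lower (j + 1)
  · rw [← tendsto_add_atTop_iff_nat 1]
    exact tendsto_of_tendsto_of_tendsto_of_le_of_le
      (tendsto_mul_two_mul_add_div_two_mul_add L 1 4)
      (tendsto_mul_two_mul_add_div_two_mul_add L 3 6) lower upper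

end ThreeTermRecurrence

/-- For the recursively defined sequence `a` counting objects of
`M_n(k)/Σ_k`, the ratios `a (k+1) / a k` (for `k ≥ 1`) are nondecreasing and
converge to `2n − 1 + 2√(n² − n)`. -/
theorem ratios_increase_to_limit (n : ℕ) (hn : 1 ≤ n) (a : ℕ → ℕ)
    (h0 : a 0 = 1) (h1 : a 1 = 1)
    (hrec : ∀ k, 2 ≤ k →
      a k = n * a (k - 1) + (n - 1) * ∑ i ∈ Finset.Icc 2 (k - 1), a i * a (k - i)) :
    (∀ k, 1 ≤ k → (a (k + 1) : ℝ) / a k ≤ (a (k + 2) : ℝ) / a (k + 1)) ∧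
    Filter.Tendsto (fun k => (a (k + 1) : ℝ) / a k) Filter.atTop
      (nhds (2 * n - 1 + 2 * Real.sqrt ((n : ℝ) ^ 2 - n))) := by
  obtain rfl | hn2 := hn.eq_or_lt
  · have hconst (k : ℕ) : a k = 1 := by
      induction k with
      | zero => exact h0
      | succ k ih =>
        rcases k with _ | k
        · exact h1
        · simpa [ih] using hrec (k + 2) (by omega)
    norm_num [hconst]
  have hpos (k : ℕ) : (0 : ℝ) < a k := by exact_mod_cast pos_of_recurrence hn h0 h1 hrec k
  have ha2 : a 2 = n := by simpa [h1] using hrec 2 le_rfl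
  have hn2' : (2 : ℝ) ≤ n := by exact_mod_cast hn2
  set s := √((n : ℝ) ^ 2 - n)
  have hs : s ^ 2 = n ^ 2 - n := Real.sq_sqrt (by nlinarith)
  have hs1 : 1 ≤ s := Real.one_le_sqrt.mpr (by nlinarith)
  have hsn : s ≤ n := by nlinarith
  refine ratio_monotone_and_tendsto (q := 2 * n - 1) (by linear_combination 4 * hs) (by linarith)
    (three_term_recurrence hn h0 h1 hrec) hpos ?_ ?_ <;>
  · rw [h1, ha2]
    push_cast
    linarith
end

section
/- Let R : Fin k → Fin k → Fin n → Prop satisfy: for all a ≠ b there exists i with R a b i or R b a i. Define G(R) to be the set of pairs (u,v) of functions Fin k → Fin n → ℝ such that 0 ≤ u a i < v a i ≤ 1 for all a,i, and v a i ≤ u b i whenever R a b i. Then: (1) every element of G(R) is a configuration of k little n-cubes, i.e., for all a ≠ b the open boxes ∏ᵢ Ioo (u a i) (v a i) and ∏ᵢ Ioo (u b i) (v b i) in Fin n → ℝ are disjoint, so G(R) ⊆ 𝒞ₙ(k); (2) G(R) is a convex subset of the real vector space ((Fin k → Fin n → ℝ) × (Fin k → Fin n → ℝ)); (3) if G(R)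 is nonempty it is contractible. -/
/-- The open box (interior) of the `a`-th little `n`-cube of a pair `c = (u, v)`. -/
def cubeInterior (n k : ℕ) (c : (Fin k → Fin n → ℝ) × (Fin k → Fin n → ℝ)) (a : Fin k) :
    Set (Fin n → ℝ) :=
  Set.univ.pi fun i => Set.Ioo (c.1 a i) (c.2 a i)

/-- `c = (u, v)` is a configuration of `k` little `n`-cubes. -/
def IsConfig (n k : ℕ) (c : (Fin k → Fin n → ℝ) × (Fin k → Fin n → ℝ)) : Prop :=
  (∀ a i, 0 ≤ c.1 a i ∧ c.1 a i < c.2 a i ∧ c.2 a i ≤ 1) ∧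
  ∀ a b : Fin k, a ≠ b → Disjoint (cubeInterior n k c a) (cubeInterior n k c b)

/-- The set `G(R)` of configurations whose cubes are separated according to `R`. -/
def GRSet (n k : ℕ) (R : Fin k → Fin k → Fin n → Prop) :
    Set ((Fin k → Fin n → ℝ) × (Fin k → Fin n → ℝ)) :=
  {c | (∀ a i, 0 ≤ c.1 a i ∧ c.1 a i < c.2 a i ∧ c.2 a i ≤ 1) ∧
    ∀ a b i, R a b i → c.2 a i ≤ c.1 b i}

lemma disj_of_sep {n k : ℕ} {c : (Fin k → Fin n → ℝ) × (Fin k → Fin n → ℝ)} {a b : Fin k}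
    {i : Fin n} (h : c.2 a i ≤ c.1 b i) :
    Disjoint (cubeInterior n k c a) (cubeInterior n k c b) := by
  rw [Set.disjoint_left]
  intro x hxa hxb
  have h1 := (hxa i (Set.mem_univ i)).2
  have h2 := (hxb i (Set.mem_univ i)).1
  linarith

/-- if `R` separates every pair of distinct labels in some direction,
then every element of `G(R)` is a little-cubes configuration, `G(R)` is convex, and it
is contractible when nonempty. -/
theorem GRSet_subset_config_convex_contractible (n k : ℕ) (hn : 1 ≤ n) (hk : 1 ≤ k)
    (R : Fin k → Fin k → Fin n → Prop)
    (hR : ∀ a b : Fin k, a ≠ b → ∃ i, R a b i ∨ R b a i) :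
    (∀ c ∈ GRSet n k R, IsConfig n k c) ∧
    Convex ℝ (GRSet n k R) ∧
    ((GRSet n k R).Nonempty → ContractibleSpace (GRSet n k R)) := by
  have hconv : Convex ℝ (GRSet n k R) := by
    intro c hc d hd s t hs ht hst
    constructor
    · intro a i
      obtain ⟨h1, h2, h3⟩ := hc.1 a i
      obtain ⟨h1', h2', h3'⟩ := hd.1 a i
      simp only [Prod.fst_add, Prod.snd_add, Prod.smul_fst, Prod.smul_snd,
        Pi.add_apply, Pi.smul_apply, smul_eq_mul]
      refine ⟨by nlinarith, ?_, by nlinarith⟩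
      rcases eq_or_lt_of_le hs with rfl | hs'
      · have : t = 1 := by linarith
        subst this; simpa using h2'
      · nlinarith
    · intro a b i hab
      have h1 := hc.2 a b i hab
      have h2 := hd.2 a b i hab
      simp only [Prod.fst_add, Prod.snd_add, Prod.smul_fst, Prod.smul_snd,
        Pi.add_apply, Pi.smul_apply, smul_eq_mul]
      nlinarith
  refine ⟨?_, hconv, fun hne => hconv.contractibleSpace hne⟩
  intro c hc
  refine ⟨hc.1, fun a b hab => ?_⟩
  obtain ⟨i, hi | hi⟩ := hR a b hab
  · exact disj_of_sep (hc.2 a b i hi)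
  · exact (disj_of_sep (hc.2 b a i hi)).symm
end

section
/- The inclusion of the subspace 𝒟ₙ(k) ⊆ 𝒞ₙ(k) of decomposable configurations of k little n-cubes into the space 𝒞ₙ(k) of all configurations is a homotopy equivalence of topological spaces. -/
/-- Decomposability of a set of labels for the (fixed) configuration `c`:
singletons are decomposable, and a set is decomposable if it can be cut by a hyperplane
perpendicular to some coordinate axis into two nonempty decomposable pieces. -/
inductive Decomp (n k : ℕ) (c : (Fin k → Fin n → ℝ) × (Fin k → Fin n → ℝ)) :
    Finset (Fin k) → Prop
  | small (S : Finset (Fin k)) : S.card ≤ 1 → Decomp n k c S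
  | split (S S₁ S₂ : Finset (Fin k)) (i : Fin n) :
      S₁.Nonempty → S₂.Nonempty → Disjoint S₁ S₂ → S₁ ∪ S₂ = S →
      (∀ a ∈ S₁, ∀ b ∈ S₂, c.2 a i ≤ c.1 b i) →
      Decomp n k c S₁ → Decomp n k c S₂ → Decomp n k c S

namespace LittleCubesAux

abbrev Pairs (n k : ℕ) := (Fin k → Fin n → ℝ) × (Fin k → Fin n → ℝ)

variable {n k : ℕ}

noncomputable def mid (c : Pairs n k) (a : Fin k) (i : Fin n) : ℝ := (c.1 a i + c.2 a i) / 2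

noncomputable def rad (c : Pairs n k) (a : Fin k) (i : Fin n) : ℝ := (c.2 a i - c.1 a i) / 2

lemma u_eq (c : Pairs n k) (a : Fin k) (i : Fin n) : c.1 a i = mid c a i - rad c a i := by
  simp only [mid, rad]; ring

lemma v_eq (c : Pairs n k) (a : Fin k) (i : Fin n) : c.2 a i = mid c a i + rad c a i := by
  simp only [mid, rad]; ring

lemma rad_pos {c : Pairs n k} (hc : IsConfig n k c) (a : Fin k) (i : Fin n) : 0 < rad c a i := by
  have := (hc.1 a i).2.1
  simp only [rad]; linarith

lemma mid_mem {c : Pairs n k} (hc : IsConfig n k c) (a : Fin k) :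
    mid c a ∈ cubeInterior n k c a := by
  intro i _
  have := (hc.1 a i).2.1
  constructor <;> simp only [mid] <;> linarith

lemma mid_ne {c : Pairs n k} (hc : IsConfig n k c) {a b : Fin k} (hab : a ≠ b) :
    mid c a ≠ mid c b := by
  intro h
  have h1 := mid_mem hc a
  have h2 := mid_mem hc b
  rw [h] at h1
  exact (hc.2 a b hab).ne_of_mem h1 h2 rfl

variable [NeZero n] [NeZero k]

noncomputable def wid (c : Pairs n k) : ℝ :=
  min ((Finset.univ : Finset (Fin k × Fin n)).inf' Finset.univ_nonempty fun p => rad c p.1 p.2)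
      ((Finset.univ : Finset (Fin k × Fin k)).inf' Finset.univ_nonempty fun p =>
        if p.1 = p.2 then 1 else dist (mid c p.1) (mid c p.2) / (2 * k))

lemma wid_pos {c : Pairs n k} (hc : IsConfig n k c) : 0 < wid c := by
  apply lt_min
  · rw [Finset.lt_inf'_iff]
    exact fun p _ => rad_pos hc p.1 p.2
  · rw [Finset.lt_inf'_iff]
    intro p _
    by_cases h : p.1 = p.2
    · simp [h]
    · simp only [h, if_false]
      apply div_pos
      · exact dist_pos.mpr (mid_ne hc h)
      · have : (0:ℝ) < k := by exact_mod_cast Nat.pos_of_ne_zero (NeZero.ne k)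
        linarith

lemma wid_le_rad (c : Pairs n k) (a : Fin k) (i : Fin n) : wid c ≤ rad c a i :=
  (min_le_left _ _).trans (Finset.inf'_le _ (Finset.mem_univ (a, i)))

lemma wid_le_dist (c : Pairs n k) {a b : Fin k} (hab : a ≠ b) :
    wid c ≤ dist (mid c a) (mid c b) / (2 * k) := by
  have h : wid c ≤ (if (a, b).1 = (a, b).2 then 1
      else dist (mid c (a, b).1) (mid c (a, b).2) / (2 * k)) :=
    (min_le_right _ _).trans (Finset.inf'_le _ (Finset.mem_univ (a, b)))
  simpa [hab] using h

/-- The shrinking deformation. -/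
noncomputable def F (t : ℝ) (c : Pairs n k) : Pairs n k :=
  (fun a i => mid c a i - ((1 - t) * rad c a i + t * wid c),
   fun a i => mid c a i + ((1 - t) * rad c a i + t * wid c))

lemma F_zero (c : Pairs n k) : F 0 c = c := by
  refine Prod.ext (funext fun a => funext fun i => ?_) (funext fun a => funext fun i => ?_) <;>
    simp only [F, mid, rad] <;> ring

lemma rho_bounds {c : Pairs n k} (hc : IsConfig n k c) {t : ℝ} (ht : t ∈ Set.Icc (0:ℝ) 1)
    (a : Fin k) (i : Fin n) :
    wid c ≤ (1 - t) * rad c a i + t * wid c ∧ (1 - t) * rad c a i + t * wid c ≤ rad c a i := by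
  obtain ⟨ht0, ht1⟩ := ht
  have h1 := wid_le_rad c a i
  constructor <;> nlinarith

lemma F_sub {c : Pairs n k} (hc : IsConfig n k c) {t : ℝ} (ht : t ∈ Set.Icc (0:ℝ) 1) (a : Fin k) :
    cubeInterior n k (F t c) a ⊆ cubeInterior n k c a := by
  apply Set.pi_mono
  intro i _
  obtain ⟨h1, h2⟩ := rho_bounds hc ht a i
  apply Set.Ioo_subset_Ioo
  · rw [u_eq c a i]; simp only [F]; linarith
  · rw [v_eq c a i]; simp only [F]; linarith

lemma F_isConfig {c : Pairs n k} (hc : IsConfig n k c) {t : ℝ} (ht : t ∈ Set.Icc (0:ℝ) 1) :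
    IsConfig n k (F t c) := by
  constructor
  · intro a i
    obtain ⟨h1, h2⟩ := rho_bounds hc ht a i
    have hw := wid_pos hc
    obtain ⟨hu0, huv, hv1⟩ := hc.1 a i
    rw [u_eq c a i] at hu0
    rw [v_eq c a i] at hv1
    refine ⟨by simp only [F]; linarith, by simp only [F]; linarith, by simp only [F]; linarith⟩
  · intro a b hab
    exact ((hc.2 a b hab).mono (F_sub hc ht a) (F_sub hc ht b))

lemma F_decomp {c : Pairs n k} (hc : IsConfig n k c) {t : ℝ} (ht : t ∈ Set.Icc (0:ℝ) 1)
    {S : Finset (Fin k)} (hS : Decomp n k c S) : Decomp n k (F t c) S := by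
  induction hS with
  | small S h => exact Decomp.small S h
  | split S S₁ S₂ i h1 h2 hd hu hle _ _ ih1 ih2 =>
    refine Decomp.split S S₁ S₂ i h1 h2 hd hu ?_ ih1 ih2
    intro a ha b hb
    have := hle a ha b hb
    rw [v_eq c a i, u_eq c b i] at this
    obtain ⟨ha1, ha2⟩ := rho_bounds hc ht a i
    obtain ⟨hb1, hb2⟩ := rho_bounds hc ht b i
    simp only [F]
    linarith


/-- Pigeonhole gap lemma: a finite set of reals with large spread has a gap of size `g`. -/
lemma gap_lemma {g : ℝ} (hg : 0 < g) :
    ∀ N (T : Finset ℝ) (hT : T.Nonempty), T.card ≤ N → 2 ≤ T.card →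
      ((T.card : ℝ) - 1) * g < T.max' hT - T.min' hT →
      ∃ t : ℝ, (∃ x ∈ T, x ≤ t) ∧ (∃ x ∈ T, t + g ≤ x) ∧ ∀ x ∈ T, x ≤ t ∨ t + g ≤ x := by
  intro N
  induction N with
  | zero => intro T hT hle h2 _; omega
  | succ N ih =>
    intro T hT hcard h2 hgap
    have hMmem : T.max' hT ∈ T := T.max'_mem hT
    have hminmem : T.min' hT ∈ T := T.min'_mem hT
    have hminlt : T.min' hT < T.max' hT := T.min'_lt_max'_of_card (by omega)
    set T' := T.erase (T.max' hT) with hT'def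
    have hT'ne : T'.Nonempty := ⟨T.min' hT, Finset.mem_erase.mpr ⟨hminlt.ne, hminmem⟩⟩
    have hsub : T' ⊆ T := Finset.erase_subset _ _
    by_cases hcase : T'.max' hT'ne + g ≤ T.max' hT
    · refine ⟨T'.max' hT'ne, ⟨T'.max' hT'ne, hsub (T'.max'_mem hT'ne), le_refl _⟩,
        ⟨T.max' hT, hMmem, hcase⟩, ?_⟩
      intro x hx
      by_cases hxM : x = T.max' hT
      · right; rw [hxM]; exact hcase
      · exact Or.inl (Finset.le_max' _ x (Finset.mem_erase.mpr ⟨hxM, hx⟩))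
    · push_neg at hcase
      have hcard' : T'.card = T.card - 1 := Finset.card_erase_of_mem hMmem
      have hmin'le : T'.min' hT'ne ≤ T.min' hT :=
        Finset.min'_le _ _ (Finset.mem_erase.mpr ⟨hminlt.ne, hminmem⟩)
      have hgap' : ((T'.card : ℝ) - 1) * g < T'.max' hT'ne - T'.min' hT'ne := by
        have hc : (T'.card : ℝ) = (T.card : ℝ) - 1 := by
          rw [hcard']; push_cast [Nat.cast_sub (by omega : 1 ≤ T.card)]; ring
        rw [hc]
        nlinarith
      have h2' : 2 ≤ T'.card := by
        rcases Nat.lt_or_ge T'.card 2 with h | h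
        · exfalso
          have h1 : T'.card = 1 := by
            have := Finset.card_pos.mpr hT'ne; omega
          have : T'.max' hT'ne = T'.min' hT'ne := by
            obtain ⟨x, hx⟩ := Finset.card_eq_one.mp h1
            simp [hx]
          rw [this] at hgap'
          rw [h1] at hgap'
          norm_num at hgap'
        · exact h
      obtain ⟨t, ⟨x1, hx1, hx1le⟩, ⟨x2, hx2, hx2ge⟩, hall⟩ :=
        ih T' hT'ne (by omega) h2' hgap'
      refine ⟨t, ⟨x1, hsub hx1, hx1le⟩, ⟨x2, hsub hx2, hx2ge⟩, ?_⟩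
      intro x hx
      by_cases hxM : x = T.max' hT
      · right
        rw [hxM]
        exact hx2ge.trans (Finset.le_max' _ _ (hsub hx2))
      · exact hall x (Finset.mem_erase.mpr ⟨hxM, hx⟩)

lemma F_one_decomp {c : Pairs n k} (hc : IsConfig n k c) (S : Finset (Fin k)) :
    Decomp n k (F 1 c) S := by
  have hw := wid_pos hc
  induction S using Finset.strongInduction with
  | _ S ih =>
    by_cases hcard : S.card ≤ 1
    · exact Decomp.small S hcard
    push_neg at hcard
    obtain ⟨a, ha, b, hb, hab⟩ := Finset.one_lt_card.mp hcard
    have hk0 : (0:ℝ) < 2 * k := by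
      have : (0:ℝ) < k := by exact_mod_cast Nat.pos_of_ne_zero (NeZero.ne k)
      linarith
    have hdist : 2 * k * wid c ≤ dist (mid c a) (mid c b) := by
      have h := wid_le_dist c hab
      rw [le_div_iff₀ hk0] at h
      linarith
    have hex : ∃ i, 2 * k * wid c ≤ |mid c a i - mid c b i| := by
      by_contra h
      push_neg at h
      have : dist (mid c a) (mid c b) < 2 * k * wid c := by
        rw [dist_pi_lt_iff (by positivity)]
        intro i
        rw [Real.dist_eq]
        exact h i
      linarith
    obtain ⟨i, hi⟩ := hex
    set T := S.image (fun x => mid c x i) with hTdef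
    have haT : mid c a i ∈ T := Finset.mem_image_of_mem _ ha
    have hbT : mid c b i ∈ T := Finset.mem_image_of_mem _ hb
    have hTne : T.Nonempty := ⟨_, haT⟩
    have hne_ab : mid c a i ≠ mid c b i := by
      intro h
      rw [h] at hi
      simp only [sub_self, abs_zero] at hi
      nlinarith
    have h2T : 2 ≤ T.card := Finset.one_lt_card.mpr ⟨_, haT, _, hbT, hne_ab⟩
    have hTcard : T.card ≤ k := le_trans (Finset.card_image_le.trans (Finset.card_le_univ S))
      (by simp)
    have hspread : ((T.card : ℝ) - 1) * (2 * wid c) < T.max' hTne - T.min' hTne := by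
      have h1 : |mid c a i - mid c b i| ≤ T.max' hTne - T.min' hTne := by
        rcases le_total (mid c a i) (mid c b i) with h | h
        · rw [abs_sub_comm, abs_of_nonneg (by linarith)]
          have := Finset.le_max' T _ hbT
          have := Finset.min'_le T _ haT
          linarith
        · rw [abs_of_nonneg (by linarith)]
          have := Finset.le_max' T _ haT
          have := Finset.min'_le T _ hbT
          linarith
      have h2 : ((T.card : ℝ) - 1) * (2 * wid c) < 2 * k * wid c := by
        have hck : (T.card : ℝ) ≤ (k : ℝ) := by exact_mod_cast hTcard
        nlinarith
      linarith
    obtain ⟨t, ⟨x1, hx1T, hx1le⟩, ⟨x2, hx2T, hx2ge⟩, hall⟩ :=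
      gap_lemma (by positivity : (0:ℝ) < 2 * wid c) T.card T hTne le_rfl h2T hspread
    set S₁ := S.filter (fun x => mid c x i ≤ t) with hS₁
    set S₂ := S.filter (fun x => ¬ mid c x i ≤ t) with hS₂
    obtain ⟨y1, hy1S, hy1⟩ := Finset.mem_image.mp hx1T
    obtain ⟨y2, hy2S, hy2⟩ := Finset.mem_image.mp hx2T
    have hS₁ne : S₁.Nonempty := ⟨y1, Finset.mem_filter.mpr ⟨hy1S, by rw [hy1]; exact hx1le⟩⟩
    have hS₂ne : S₂.Nonempty := ⟨y2, Finset.mem_filter.mpr ⟨hy2S, by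
      rw [hy2]; intro h; nlinarith⟩⟩
    have hdisj : Disjoint S₁ S₂ := Finset.disjoint_filter_filter_not S S _
    have hunion : S₁ ∪ S₂ = S := Finset.filter_union_filter_not_eq _ S
    have hS₁ss : S₁ ⊂ S := Finset.filter_ssubset.mpr
      ⟨y2, hy2S, by rw [hy2]; intro h; nlinarith⟩
    have hS₂ss : S₂ ⊂ S := Finset.filter_ssubset.mpr
      ⟨y1, hy1S, by rw [not_not, hy1]; exact hx1le⟩
    refine Decomp.split S S₁ S₂ i hS₁ne hS₂ne hdisj hunion ?_ (ih S₁ hS₁ss) (ih S₂ hS₂ss)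
    intro a' ha' b' hb'
    obtain ⟨ha'S, ha'le⟩ := Finset.mem_filter.mp ha'
    obtain ⟨hb'S, hb'gt⟩ := Finset.mem_filter.mp hb'
    have hb'mem : mid c b' i ∈ T := Finset.mem_image_of_mem _ hb'S
    have hb'ge : t + 2 * wid c ≤ mid c b' i := by
      rcases hall _ hb'mem with h | h
      · exact absurd h hb'gt
      · exact h
    simp only [F]
    have : (1 - 1) * rad c a' i + 1 * wid c = wid c := by ring
    rw [this]
    have : (1 - 1) * rad c b' i + 1 * wid c = wid c := by ring
    rw [this]
    linarith


section Continuity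

lemma continuous_finset_inf' {ι X : Type*} [TopologicalSpace X]
    {s : Finset ι} (hs : s.Nonempty) {f : ι → X → ℝ} (hf : ∀ i, Continuous (f i)) :
    Continuous fun x => s.inf' hs fun i => f i x := by
  induction hs using Finset.Nonempty.cons_induction with
  | singleton a =>
    have h : (fun x => ({a} : Finset ι).inf' ⟨a, Finset.mem_singleton_self a⟩ fun i => f i x)
        = f a := by
      funext x
      simp
    rw [show (Finset.singleton_nonempty a) = ⟨a, Finset.mem_singleton_self a⟩ from rfl] at *
    rw [h]
    exact hf a
  | cons a s h hs ih =>
    have heq : (fun x => (Finset.cons a s h).inf' (Finset.cons_nonempty h) fun i => f i x)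
        = fun x => min (f a x) (s.inf' hs fun i => f i x) := by
      funext x
      exact Finset.inf'_cons hs (fun i => f i x)
    rw [show (Finset.cons_nonempty h : (Finset.cons a s h).Nonempty)
        = Finset.cons_nonempty h from rfl] at *
    rw [heq]
    exact (hf a).min ih

lemma continuous_mid (a : Fin k) (i : Fin n) :
    Continuous fun c : Pairs n k => mid c a i := by
  unfold mid
  fun_prop

lemma continuous_mid' (a : Fin k) : Continuous fun c : Pairs n k => mid c a :=
  continuous_pi fun i => continuous_mid a i

lemma continuous_rad (a : Fin k) (i : Fin n) :
    Continuous fun c : Pairs n k => rad c a i := by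
  unfold rad
  fun_prop

lemma continuous_wid : Continuous (wid : Pairs n k → ℝ) := by
  unfold wid
  apply Continuous.min
  · exact continuous_finset_inf' _ fun p => continuous_rad p.1 p.2
  · apply continuous_finset_inf'
    intro p
    by_cases h : p.1 = p.2
    · simp only [h, if_pos rfl]
      exact continuous_const
    · simp only [if_neg h]
      exact (Continuous.dist (continuous_mid' p.1) (continuous_mid' p.2)).div_const _

lemma continuous_F : Continuous fun p : ℝ × Pairs n k => F p.1 p.2 := by
  unfold F
  refine Continuous.prodMk ?_ ?_ <;>
  · refine continuous_pi fun a => continuous_pi fun i => ?_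
    have h1 : Continuous fun p : ℝ × Pairs n k => mid p.2 a i :=
      (continuous_mid a i).comp continuous_snd
    have h2 : Continuous fun p : ℝ × Pairs n k => rad p.2 a i :=
      (continuous_rad a i).comp continuous_snd
    have h3 : Continuous fun p : ℝ × Pairs n k => wid p.2 :=
      continuous_wid.comp continuous_snd
    have h4 : Continuous fun p : ℝ × Pairs n k => p.1 := continuous_fst
    continuity

end Continuity

end LittleCubesAux

/-- STATEMENT 8: the inclusion `𝒟ₙ(k) ⊆ 𝒞ₙ(k)` of the subspace of decomposable
configurations into the space of all configurations is a homotopy equivalence. -/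
theorem decomposables_homotopy_equiv (n k : ℕ) (hn : 1 ≤ n) (hk : 1 ≤ k) :
    ∃ e : ContinuousMap.HomotopyEquiv
        {c : (Fin k → Fin n → ℝ) × (Fin k → Fin n → ℝ) |
          IsConfig n k c ∧ Decomp n k c Finset.univ}
        {c : (Fin k → Fin n → ℝ) × (Fin k → Fin n → ℝ) | IsConfig n k c},
      ∀ x, (e.toFun x : (Fin k → Fin n → ℝ) × (Fin k → Fin n → ℝ)) =
        (x : (Fin k → Fin n → ℝ) × (Fin k → Fin n → ℝ)) := by
  haveI : NeZero n := ⟨by omega⟩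
  haveI : NeZero k := ⟨by omega⟩
  open LittleCubesAux in
  classical
  set C := {c : (Fin k → Fin n → ℝ) × (Fin k → Fin n → ℝ) | IsConfig n k c} with hC
  set D := {c : (Fin k → Fin n → ℝ) × (Fin k → Fin n → ℝ) |
    IsConfig n k c ∧ Decomp n k c Finset.univ} with hD
  have h01 : (1:ℝ) ∈ Set.Icc (0:ℝ) 1 := by norm_num
  let incl : C(D, C) := ⟨fun x => ⟨x.1, x.2.1⟩, Continuous.subtype_mk continuous_subtype_val _⟩
  let retr : C(C, D) := ⟨fun x => ⟨LittleCubesAux.F 1 x.1,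
      LittleCubesAux.F_isConfig x.2 h01, LittleCubesAux.F_one_decomp x.2 Finset.univ⟩,
    Continuous.subtype_mk
      (LittleCubesAux.continuous_F.comp (continuous_const.prodMk continuous_subtype_val)) _⟩
  have hmem : ∀ s : unitInterval, (1 - (s:ℝ)) ∈ Set.Icc (0:ℝ) 1 := fun s =>
    ⟨by linarith [s.2.2], by linarith [s.2.1]⟩
  let HC : ContinuousMap.Homotopy (incl.comp retr) (ContinuousMap.id C) :=
    { toFun := fun p => ⟨LittleCubesAux.F (1 - (p.1 : ℝ)) p.2.1,
        LittleCubesAux.F_isConfig p.2.2 (hmem p.1)⟩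
      continuous_toFun := by
        apply Continuous.subtype_mk
        exact LittleCubesAux.continuous_F.comp
          ((continuous_const.sub (continuous_subtype_val.comp continuous_fst)).prodMk
            (continuous_subtype_val.comp continuous_snd))
      map_zero_left := fun x => by
        simp only [Set.Icc.coe_zero, sub_zero]
        rfl
      map_one_left := fun x => by
        simp only [Set.Icc.coe_one, sub_self]
        exact Subtype.ext (LittleCubesAux.F_zero x.1) }
  let HD : ContinuousMap.Homotopy (retr.comp incl) (ContinuousMap.id D) :=
    { toFun := fun p => ⟨LittleCubesAux.F (1 - (p.1 : ℝ)) p.2.1,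
        LittleCubesAux.F_isConfig p.2.2.1 (hmem p.1),
        LittleCubesAux.F_decomp p.2.2.1 (hmem p.1) p.2.2.2⟩
      continuous_toFun := by
        apply Continuous.subtype_mk
        exact LittleCubesAux.continuous_F.comp
          ((continuous_const.sub (continuous_subtype_val.comp continuous_fst)).prodMk
            (continuous_subtype_val.comp continuous_snd))
      map_zero_left := fun x => by
        simp only [Set.Icc.coe_zero, sub_zero]
        rfl
      map_one_left := fun x => by
        simp only [Set.Icc.coe_one, sub_self]
        exact Subtype.ext (LittleCubesAux.F_zero x.1) }
  exact ⟨⟨incl, retr, ⟨HD⟩, ⟨HC⟩⟩, fun x => rfl⟩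
end

section
/- The inclusion of the subspace of Milgram decomposable configurations of k little n-cubes into the space 𝒞ₙ(k) of all configurations is a homotopy equivalence of topological spaces. -/
/-- `j`-Milgram-decomposability (`j` is 0-based here, so `j` ranges over `0,…,n`,
corresponding to `1,…,n+1` in the paper): at level `n` only sets with at most one
element are decomposable; at level `j < n` the set must split into an ordered sequence
of nonempty blocks, consecutively separated in the `j`-th coordinate direction, each of
which is `(j+1)`-Milgram-decomposable. -/
inductive MDecomp (n k : ℕ) (c : (Fin k → Fin n → ℝ) × (Fin k → Fin n → ℝ)) :
    ℕ → Finset (Fin k) → Prop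
  | top (S : Finset (Fin k)) : S.card ≤ 1 → MDecomp n k c n S
  | blocks (j : ℕ) (hj : j < n) (S : Finset (Fin k)) (p : ℕ) (hp : 1 ≤ p)
      (B : Fin p → Finset (Fin k))
      (hne : ∀ r, (B r).Nonempty)
      (hdis : ∀ r q, r ≠ q → Disjoint (B r) (B q))
      (hcover : Finset.univ.biUnion B = S)
      (hsep : ∀ r q : Fin p, r < q → ∀ a ∈ B r, ∀ b ∈ B q, c.2 a ⟨j, hj⟩ ≤ c.1 b ⟨j, hj⟩)
      (hrec : ∀ r, MDecomp n k c (j + 1) (B r)) :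
      MDecomp n k c j S

namespace MilgramAux

/-- min over a nonempty finset of continuous functions is continuous -/
lemma cont_inf' {X : Type*} [TopologicalSpace X] {ι : Type*} (s : Finset ι)
    {f : ι → X → ℝ} (hf : ∀ i, Continuous (f i)) :
    ∀ hs : s.Nonempty, Continuous fun x => s.inf' hs fun i => f i x := by
  induction s using Finset.cons_induction with
  | empty => intro hs; simp at hs
  | cons a s ha ih =>
    intro hs
    rcases s.eq_empty_or_nonempty with rfl | hs'
    · simpa using hf a
    · have h : (fun x => (Finset.cons a s ha).inf' hs fun i => f i x)
          = fun x => min (f a x) (s.inf' hs' fun i => f i x) := by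
        funext x; rw [Finset.inf'_cons hs']
      rw [h]; exact (hf a).min (ih hs')

lemma cont_sup' {X : Type*} [TopologicalSpace X] {ι : Type*} (s : Finset ι)
    {f : ι → X → ℝ} (hf : ∀ i, Continuous (f i)) :
    ∀ hs : s.Nonempty, Continuous fun x => s.sup' hs fun i => f i x := by
  induction s using Finset.cons_induction with
  | empty => intro hs; simp at hs
  | cons a s ha ih =>
    intro hs
    rcases s.eq_empty_or_nonempty with rfl | hs'
    · simpa using hf a
    · have h : (fun x => (Finset.cons a s ha).sup' hs fun i => f i x)
          = fun x => max (f a x) (s.sup' hs' fun i => f i x) := by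
        funext x; rw [Finset.sup'_cons hs']
      rw [h]; exact (hf a).max (ih hs')


abbrev Pr (n k : ℕ) := (Fin k → Fin n → ℝ) × (Fin k → Fin n → ℝ)

variable {n k : ℕ}

noncomputable section

def ctr (c : Pr n k) (a : Fin k) (i : Fin n) : ℝ := (c.1 a i + c.2 a i) / 2
def hlf (c : Pr n k) (a : Fin k) (i : Fin n) : ℝ := (c.2 a i - c.1 a i) / 2

def hmin (hn : 1 ≤ n) (hk : 1 ≤ k) (c : Pr n k) : ℝ :=
  Finset.univ.inf' (haveI : Nonempty (Fin k × Fin n) := ⟨(⟨0, hk⟩, ⟨0, hn⟩)⟩;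
      Finset.univ_nonempty)
    fun p : Fin k × Fin n => hlf c p.1 p.2

def dmin (hn : 1 ≤ n) (hk : 1 ≤ k) (c : Pr n k) : ℝ :=
  Finset.univ.inf' (haveI : Nonempty (Fin k × Fin k) := ⟨(⟨0, hk⟩, ⟨0, hk⟩)⟩;
      Finset.univ_nonempty)
    fun p : Fin k × Fin k =>
      if p.1 = p.2 then 1 else
        Finset.univ.sup' (haveI : Nonempty (Fin n) := ⟨⟨0, hn⟩⟩; Finset.univ_nonempty)
          fun i : Fin n => |ctr c p.1 i - ctr c p.2 i|

def eps (hn : 1 ≤ n) (hk : 1 ≤ k) (c : Pr n k) : ℝ :=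
  (1/2) * min (hmin hn hk c) (dmin hn hk c / (4 * k))

variable (hn : 1 ≤ n) (hk : 1 ≤ k)

/-- centers of distinct cubes are distinct -/
lemma ctr_ne {c : Pr n k} (hc : IsConfig n k c) {a b : Fin k} (hab : a ≠ b) :
    ∃ i, ctr c a i ≠ ctr c b i := by
  by_contra h
  push_neg at h
  have ha : ctr c a ∈ cubeInterior n k c a := by
    intro i _
    have := (hc.1 a i).2.1
    constructor <;> simp only [ctr] <;> linarith
  have hb : ctr c a ∈ cubeInterior n k c b := by
    intro i _
    have := (hc.1 b i).2.1
    have hi := h i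
    simp only [ctr] at hi ⊢
    constructor <;> rw [hi] <;> linarith
  exact Set.disjoint_left.mp (hc.2 a b hab) ha hb

lemma hmin_pos {c : Pr n k} (hc : IsConfig n k c) : 0 < hmin hn hk c := by
  rw [hmin, Finset.lt_inf'_iff]
  rintro ⟨a, i⟩ -
  have := (hc.1 a i).2.1
  simp only [hlf]; linarith

lemma dmin_pos {c : Pr n k} (hc : IsConfig n k c) : 0 < dmin hn hk c := by
  rw [dmin, Finset.lt_inf'_iff]
  rintro ⟨a, b⟩ -
  by_cases hab : a = b
  · simp [hab]
  · simp only [hab, if_false]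
    rw [Finset.lt_sup'_iff]
    obtain ⟨i, hi⟩ := ctr_ne hc hab
    exact ⟨i, Finset.mem_univ i, abs_pos.mpr (sub_ne_zero.mpr hi)⟩

lemma eps_pos {c : Pr n k} (hc : IsConfig n k c) : 0 < eps hn hk c := by
  have h1 := hmin_pos hn hk hc
  have h2 := dmin_pos hn hk hc
  have hk' : (0:ℝ) < 4 * k := by positivity
  rw [eps]
  have : 0 < min (hmin hn hk c) (dmin hn hk c / (4 * k)) := lt_min h1 (by positivity)
  linarith

lemma eps_le_hlf {c : Pr n k} (hc : IsConfig n k c) (a : Fin k) (i : Fin n) :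
    eps hn hk c ≤ hlf c a i := by
  have h1 : hmin hn hk c ≤ hlf c a i := Finset.inf'_le _ (Finset.mem_univ (a, i))
  have h2 := hmin_pos hn hk hc
  have h3 := dmin_pos hn hk hc
  have hk' : (0:ℝ) < 4 * k := by positivity
  have : min (hmin hn hk c) (dmin hn hk c / (4 * k)) ≤ hmin hn hk c := min_le_left _ _
  rw [eps]; linarith

lemma dmin_le {c : Pr n k} {a b : Fin k} (hab : a ≠ b) {M : ℝ}
    (hall : ∀ i : Fin n, |ctr c a i - ctr c b i| ≤ M) :
    dmin hn hk c ≤ M := by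
  have h1 : dmin hn hk c ≤ (if a = b then 1 else
        Finset.univ.sup' (haveI : Nonempty (Fin n) := ⟨⟨0, hn⟩⟩; Finset.univ_nonempty)
          fun i : Fin n => |ctr c a i - ctr c b i|) :=
    Finset.inf'_le _ (Finset.mem_univ (a, b))
  rw [if_neg hab] at h1
  refine h1.trans ?_
  rw [Finset.sup'_le_iff]
  exact fun i _ => hall i

/-- the key inequality: clusters of diameter `2ε(k-1)` are single cubes -/
lemma key_ineq {c : Pr n k} (hc : IsConfig n k c) :
    2 * eps hn hk c * (k - 1) < dmin hn hk c := by
  have h2 := dmin_pos hn hk hc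
  have hk1 : (1:ℝ) ≤ k := by exact_mod_cast hk
  have hk' : (0:ℝ) < 4 * k := by positivity
  have hmle : min (hmin hn hk c) (dmin hn hk c / (4 * k)) ≤ dmin hn hk c / (4 * k) :=
    min_le_right _ _
  have hmpos : 0 < min (hmin hn hk c) (dmin hn hk c / (4 * k)) :=
    lt_min (hmin_pos hn hk hc) (by positivity)
  rw [eps]
  have hkm : (0:ℝ) ≤ (k:ℝ) - 1 := by linarith
  calc 2 * ((1/2) * min (hmin hn hk c) (dmin hn hk c / (4 * k))) * ((k:ℝ) - 1)
      = min (hmin hn hk c) (dmin hn hk c / (4 * k)) * ((k:ℝ) - 1) := by ring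
    _ ≤ (dmin hn hk c / (4 * k)) * ((k:ℝ) - 1) := mul_le_mul_of_nonneg_right hmle hkm
    _ < dmin hn hk c := by
        rw [div_mul_eq_mul_div, div_lt_iff₀ hk']
        nlinarith

end

end MilgramAux

namespace MilgramAux
variable {n k : ℕ}

open Finset in
lemma gap_dichotomy {ι : Type*} [DecidableEq ι] (S : Finset ι) (hS : S.Nonempty)
    (f : ι → ℝ) {δ : ℝ} (hδ : 0 < δ) :
    (∀ a ∈ S, ∀ b ∈ S, |f a - f b| ≤ δ * (S.card - 1)) ∨
    ∃ S₁ S₂ : Finset ι, S₁.Nonempty ∧ S₂.Nonempty ∧ Disjoint S₁ S₂ ∧ S₁ ∪ S₂ = S ∧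
      S₁.card < S.card ∧ S₂.card < S.card ∧ ∀ a ∈ S₁, ∀ b ∈ S₂, f a + δ ≤ f b := by
  obtain ⟨a₀, ha₀S, ha₀⟩ := Finset.exists_mem_eq_inf' hS f
  set t := S.inf' hS f with ht
  by_cases hall : ∀ b ∈ S, f b ≤ t + δ * (S.card - 1)
  · left
    intro a ha b hb
    have h1 : t ≤ f a := Finset.inf'_le _ ha
    have h2 : t ≤ f b := Finset.inf'_le _ hb
    rw [abs_sub_le_iff]
    constructor <;> [linarith [hall a ha]; linarith [hall b hb]]
  · push_neg at hall
    obtain ⟨b₀, hb₀S, hb₀⟩ := hall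
    have hc1 : 1 ≤ S.card := Finset.card_pos.mpr hS
    set r : ι → ℕ := fun a => ⌈(f a - t) / δ⌉₊ with hr
    have hr0 : r a₀ = 0 := by
      simp only [hr, Nat.ceil_eq_zero]
      rw [← ha₀]
      simp [div_nonpos_iff, hδ.le]
    have hrb : S.card ≤ r b₀ := by
      have h1 : ((S.card - 1 : ℕ) : ℝ) < (f b₀ - t) / δ := by
        rw [lt_div_iff₀ hδ]
        push_cast [hc1]
        nlinarith
      have h2 := Nat.lt_ceil.mpr h1
      simp only [hr]
      omega
    have hmiss : ∃ s ∈ Finset.Icc 1 S.card, s ∉ S.image r := by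
      by_contra h
      push_neg at h
      have himg : (0:ℕ) ∈ S.image r := Finset.mem_image.mpr ⟨a₀, ha₀S, hr0⟩
      have hsub : insert 0 (Finset.Icc 1 S.card) ⊆ S.image r :=
        Finset.insert_subset himg (fun s hs => h s hs)
      have h1 := Finset.card_le_card hsub
      rw [Finset.card_insert_of_notMem (by simp), Nat.card_Icc] at h1
      have h2 : (S.image r).card ≤ S.card := Finset.card_image_le
      omega
    obtain ⟨s, hsIcc, hsmiss⟩ := hmiss
    rw [Finset.mem_Icc] at hsIcc
    right
    refine ⟨S.filter (fun a => r a < s), S.filter (fun a => ¬ r a < s),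
      ⟨a₀, Finset.mem_filter.mpr ⟨ha₀S, by omega⟩⟩,
      ⟨b₀, Finset.mem_filter.mpr ⟨hb₀S, by omega⟩⟩,
      Finset.disjoint_filter_filter_not S S _,
      Finset.filter_union_filter_not_eq _ S, ?_, ?_, ?_⟩
    · exact Finset.card_lt_card ((Finset.ssubset_iff_of_subset (Finset.filter_subset _ _)).mpr
        ⟨b₀, hb₀S, by simp only [Finset.mem_filter]; push_neg; intro _; omega⟩)
    · exact Finset.card_lt_card ((Finset.ssubset_iff_of_subset (Finset.filter_subset _ _)).mpr
        ⟨a₀, ha₀S, by simp only [Finset.mem_filter]; push_neg; intro _; omega⟩)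
    · intro a haf b hbf
      obtain ⟨haS, hra⟩ := Finset.mem_filter.mp haf
      obtain ⟨hbS, hrb'⟩ := Finset.mem_filter.mp hbf
      have hbne : r b ≠ s := fun he => hsmiss (Finset.mem_image.mpr ⟨b, hbS, he⟩)
      have hrbs : s < r b := by omega
      simp only [hr] at hra hrbs
      have hfa : (f a - t) / δ ≤ ((s - 1 : ℕ) : ℝ) := Nat.ceil_le.mp (by omega)
      have hfb : ((s : ℕ) : ℝ) < (f b - t) / δ := Nat.lt_ceil.mp hrbs
      rw [div_le_iff₀ hδ] at hfa
      rw [lt_div_iff₀ hδ] at hfb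
      have hs1 : ((s - 1 : ℕ) : ℝ) = (s : ℝ) - 1 := by
        push_cast [hsIcc.1]; ring
      rw [hs1] at hfa
      nlinarith
end MilgramAux

namespace MilgramAux
variable {n k : ℕ}

lemma mdecomp_mono {c c' : Pr n k} (h1 : ∀ a i, c.1 a i ≤ c'.1 a i)
    (h2 : ∀ a i, c'.2 a i ≤ c.2 a i) {j : ℕ} {S : Finset (Fin k)}
    (hd : MDecomp n k c j S) : MDecomp n k c' j S := by
  induction hd with
  | top S hS => exact MDecomp.top S hS
  | blocks j hj S p hp B hne hdis hcover hsep hrec ih =>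
    exact MDecomp.blocks j hj S p hp B hne hdis hcover
      (fun r q hrq a ha b hb =>
        le_trans (h2 a _) (le_trans (hsep r q hrq a ha b hb) (h1 b _)))
      ih

lemma mdecomp_concat {c : Pr n k} {j : ℕ} (hj : j < n) {S₁ S₂ : Finset (Fin k)}
    (hdisj : Disjoint S₁ S₂)
    (hsep : ∀ a ∈ S₁, ∀ b ∈ S₂, c.2 a ⟨j, hj⟩ ≤ c.1 b ⟨j, hj⟩)
    (h1 : MDecomp n k c j S₁) (h2 : MDecomp n k c j S₂) :
    MDecomp n k c j (S₁ ∪ S₂) := by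
  cases h1 with
  | top _ _ => exact absurd hj (lt_irrefl _)
  | blocks _ hj1 _ p hp B hne hdis hcover hsep1 hrec =>
    cases h2 with
    | top _ _ => exact absurd hj (lt_irrefl _)
    | blocks _ hj2 _ p' hp' B' hne' hdis' hcover' hsep2 hrec' =>
      have hBsub : ∀ r, B r ⊆ S₁ := fun r =>
        hcover ▸ Finset.subset_biUnion_of_mem B (Finset.mem_univ r)
      have hBsub' : ∀ r, B' r ⊆ S₂ := fun r =>
        hcover' ▸ Finset.subset_biUnion_of_mem B' (Finset.mem_univ r)
      have rep : ∀ r : Fin (p + p'),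
          (∃ i, r = Fin.castAdd p' i) ∨ (∃ i, r = Fin.natAdd p i) := fun r =>
        Fin.addCases (fun i => Or.inl ⟨i, rfl⟩) (fun i => Or.inr ⟨i, rfl⟩) r
      refine MDecomp.blocks j hj _ (p + p') (by omega) (Fin.append B B') ?_ ?_ ?_ ?_ ?_
      · intro r
        rcases rep r with ⟨i, rfl⟩ | ⟨i, rfl⟩
        · rw [Fin.append_left]; exact hne i
        · rw [Fin.append_right]; exact hne' i
      · intro r q hrq
        rcases rep r with ⟨i, rfl⟩ | ⟨i, rfl⟩ <;> rcases rep q with ⟨i', rfl⟩ | ⟨i', rfl⟩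
        · rw [Fin.append_left, Fin.append_left]
          refine hdis i i' (fun h => hrq ?_); rw [h]
        · rw [Fin.append_left, Fin.append_right]
          exact hdisj.mono (hBsub i) (hBsub' i')
        · rw [Fin.append_right, Fin.append_left]
          exact (hdisj.mono (hBsub i') (hBsub' i)).symm
        · rw [Fin.append_right, Fin.append_right]
          refine hdis' i i' (fun h => hrq ?_); rw [h]
      · ext x
        rw [Finset.mem_union, ← hcover, ← hcover']
        simp only [Finset.mem_biUnion, Finset.mem_univ, true_and]
        constructor
        · rintro ⟨r, hr⟩
          rcases rep r with ⟨i, rfl⟩ | ⟨i, rfl⟩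
          · rw [Fin.append_left] at hr; exact Or.inl ⟨i, hr⟩
          · rw [Fin.append_right] at hr; exact Or.inr ⟨i, hr⟩
        · rintro (⟨i, hi⟩ | ⟨i, hi⟩)
          · exact ⟨Fin.castAdd p' i, by rwa [Fin.append_left]⟩
          · exact ⟨Fin.natAdd p i, by rwa [Fin.append_right]⟩
      · intro r q hrq a ha b hb
        rcases rep r with ⟨i, rfl⟩ | ⟨i, rfl⟩ <;> rcases rep q with ⟨i', rfl⟩ | ⟨i', rfl⟩
        · rw [Fin.append_left] at ha; rw [Fin.append_left] at hb
          refine hsep1 i i' ?_ a ha b hb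
          rw [Fin.lt_def] at hrq ⊢
          simpa using hrq
        · rw [Fin.append_left] at ha; rw [Fin.append_right] at hb
          exact hsep a (hBsub i ha) b (hBsub' i' hb)
        · exfalso
          simp only [Fin.lt_def, Fin.coe_natAdd, Fin.coe_castAdd] at hrq
          omega
        · rw [Fin.append_right] at ha; rw [Fin.append_right] at hb
          refine hsep2 i i' ?_ a ha b hb
          rw [Fin.lt_def] at hrq ⊢
          simpa using hrq
      · intro r
        rcases rep r with ⟨i, rfl⟩ | ⟨i, rfl⟩
        · rw [Fin.append_left]; exact hrec i
        · rw [Fin.append_right]; exact hrec' i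

lemma mdecomp_shrink (hn : 1 ≤ n) (hk : 1 ≤ k) {c : Pr n k} (hc : IsConfig n k c)
    {c' : Pr n k}
    (hc'1 : ∀ a i, c'.1 a i = ctr c a i - eps hn hk c)
    (hc'2 : ∀ a i, c'.2 a i = ctr c a i + eps hn hk c) :
    ∀ d j (S : Finset (Fin k)), n - j = d → j ≤ n → S.Nonempty →
      (∀ a ∈ S, ∀ b ∈ S, ∀ i : Fin n, (i : ℕ) < j →
        |ctr c a i - ctr c b i| ≤ 2 * eps hn hk c * (k - 1)) →
      MDecomp n k c' j S := by
  have hepos := eps_pos hn hk hc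
  intro d
  induction d with
  | zero =>
    intro j S hd hjle hS hinv
    have hjn : j = n := by omega
    subst hjn
    refine MDecomp.top S (Finset.card_le_one.mpr ?_)
    intro a ha b hb
    by_contra hab
    have h1 : dmin hn hk c ≤ 2 * eps hn hk c * (k - 1) :=
      dmin_le hn hk hab (fun i => hinv a ha b hb i i.isLt)
    exact absurd h1 (not_le.mpr (key_ineq hn hk hc))
  | succ d ih =>
    intro j S hd hjle
    have hjn : j < n := by omega
    induction S using Finset.strongInduction with
    | _ S ihS =>
      intro hS hinv
      rcases gap_dichotomy S hS (fun a => ctr c a ⟨j, hjn⟩)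
          (δ := 2 * eps hn hk c) (by linarith) with hwithin |
          ⟨S₁, S₂, hS₁, hS₂, hdisj, hunion, hcard₁, hcard₂, hsepj⟩
      · -- single block, recurse at level j+1
        have hcardk : (S.card : ℝ) ≤ k := by
          have h := (Finset.card_le_univ S).trans (le_of_eq (Fintype.card_fin k))
          exact_mod_cast h
        refine MDecomp.blocks j hjn S 1 le_rfl (fun _ => S) (fun _ => hS)
          (fun r q hrq => absurd (Subsingleton.elim r q) hrq) (by simp)
          (fun r q hrq => absurd (Subsingleton.elim r q) (ne_of_lt hrq)) ?_
        intro _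
        refine ih (j + 1) S (by omega) (by omega) hS ?_
        intro a ha b hb i hi
        rcases Nat.lt_or_ge (i : ℕ) j with h | h
        · exact hinv a ha b hb i h
        · have hij : i = ⟨j, hjn⟩ := Fin.ext (show (i : ℕ) = j by omega)
          subst hij
          refine (hwithin a ha b hb).trans ?_
          have h2 : (S.card : ℝ) - 1 ≤ (k : ℝ) - 1 := by linarith
          nlinarith
      · -- split into two separated parts, recurse on each and concatenate
        have hsub₁ : S₁ ⊆ S := hunion ▸ Finset.subset_union_left
        have hsub₂ : S₂ ⊆ S := hunion ▸ Finset.subset_union_right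
        have hS₁' := hS₁
        have hS₂' := hS₂
        obtain ⟨a₁, ha₁⟩ := hS₁'
        obtain ⟨b₂, hb₂⟩ := hS₂'
        have hss₁ : S₁ ⊂ S := (Finset.ssubset_iff_of_subset hsub₁).mpr
          ⟨b₂, hsub₂ hb₂, Finset.disjoint_right.mp hdisj hb₂⟩
        have hss₂ : S₂ ⊂ S := (Finset.ssubset_iff_of_subset hsub₂).mpr
          ⟨a₁, hsub₁ ha₁, Finset.disjoint_left.mp hdisj ha₁⟩
        have h1 := ihS S₁ hss₁ hS₁ (fun a ha b hb => hinv a (hsub₁ ha) b (hsub₁ hb))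
        have h2 := ihS S₂ hss₂ hS₂ (fun a ha b hb => hinv a (hsub₂ ha) b (hsub₂ hb))
        have hsep' : ∀ a ∈ S₁, ∀ b ∈ S₂, c'.2 a ⟨j, hjn⟩ ≤ c'.1 b ⟨j, hjn⟩ := by
          intro a ha b hb
          rw [hc'1, hc'2]
          have := hsepj a ha b hb
          linarith
        have := mdecomp_concat hjn hdisj hsep' h1 h2
        rwa [hunion] at this

end MilgramAux

namespace MilgramAux
variable {n k : ℕ}

noncomputable def phi (hn : 1 ≤ n) (hk : 1 ≤ k) (t : ℝ) (c : Pr n k) : Pr n k :=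
  (fun a i => (1 - t) * c.1 a i + t * (ctr c a i - eps hn hk c),
   fun a i => (1 - t) * c.2 a i + t * (ctr c a i + eps hn hk c))

variable (hn : 1 ≤ n) (hk : 1 ≤ k)

lemma phi_zero (c : Pr n k) : phi hn hk 0 c = c :=
  Prod.ext (funext fun a => funext fun i => by simp [phi])
    (funext fun a => funext fun i => by simp [phi])

lemma phi_ge {c : Pr n k} (hc : IsConfig n k c) {t : ℝ} (ht0 : 0 ≤ t) (_ht1 : t ≤ 1)
    (a : Fin k) (i : Fin n) : c.1 a i ≤ (phi hn hk t c).1 a i := by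
  have h1 := eps_le_hlf hn hk hc a i
  simp only [phi, ctr, hlf] at h1 ⊢
  nlinarith

lemma phi_le {c : Pr n k} (hc : IsConfig n k c) {t : ℝ} (ht0 : 0 ≤ t) (_ht1 : t ≤ 1)
    (a : Fin k) (i : Fin n) : (phi hn hk t c).2 a i ≤ c.2 a i := by
  have h1 := eps_le_hlf hn hk hc a i
  simp only [phi, ctr, hlf] at h1 ⊢
  nlinarith

lemma phi_lt {c : Pr n k} (hc : IsConfig n k c) {t : ℝ} (ht0 : 0 ≤ t) (ht1 : t ≤ 1)
    (a : Fin k) (i : Fin n) : (phi hn hk t c).1 a i < (phi hn hk t c).2 a i := by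
  have h1 := eps_pos hn hk hc
  have h2 := (hc.1 a i).2.1
  simp only [phi, ctr]
  rcases ht1.lt_or_eq with h | h
  · nlinarith
  · subst h; nlinarith

lemma isConfig_phi {c : Pr n k} (hc : IsConfig n k c) {t : ℝ} (ht0 : 0 ≤ t) (ht1 : t ≤ 1) :
    IsConfig n k (phi hn hk t c) := by
  constructor
  · intro a i
    refine ⟨le_trans (hc.1 a i).1 (phi_ge hn hk hc ht0 ht1 a i),
      phi_lt hn hk hc ht0 ht1 a i,
      le_trans (phi_le hn hk hc ht0 ht1 a i) (hc.1 a i).2.2⟩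
  · intro a b hab
    refine (hc.2 a b hab).mono ?_ ?_ <;>
      exact Set.pi_mono fun i _ => Set.Ioo_subset_Ioo
        (phi_ge hn hk hc ht0 ht1 _ i) (phi_le hn hk hc ht0 ht1 _ i)

lemma mdecomp_phi {c : Pr n k} (hc : IsConfig n k c) {t : ℝ} (ht0 : 0 ≤ t) (ht1 : t ≤ 1)
    {j : ℕ} {S : Finset (Fin k)} (hd : MDecomp n k c j S) :
    MDecomp n k (phi hn hk t c) j S :=
  mdecomp_mono (phi_ge hn hk hc ht0 ht1) (phi_le hn hk hc ht0 ht1) hd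

lemma mdecomp_phi_one {c : Pr n k} (hc : IsConfig n k c) :
    MDecomp n k (phi hn hk 1 c) 0 Finset.univ := by
  haveI : Nonempty (Fin k) := ⟨⟨0, hk⟩⟩
  refine mdecomp_shrink hn hk hc (c' := phi hn hk 1 c) ?_ ?_ n 0 Finset.univ
    (by omega) (by omega) Finset.univ_nonempty (fun a _ b _ i hi => absurd hi (by omega))
  · intro a i; simp [phi]
  · intro a i; simp [phi]

lemma cont_proj1 (a : Fin k) (i : Fin n) : Continuous fun c : Pr n k => c.1 a i :=
  (continuous_apply i).comp ((continuous_apply a).comp continuous_fst)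

lemma cont_proj2 (a : Fin k) (i : Fin n) : Continuous fun c : Pr n k => c.2 a i :=
  (continuous_apply i).comp ((continuous_apply a).comp continuous_snd)

lemma cont_eps : Continuous (eps hn hk : Pr n k → ℝ) := by
  have h1 : Continuous (hmin hn hk : Pr n k → ℝ) := by
    refine cont_inf' _ ?_ _
    rintro ⟨a, i⟩
    exact ((cont_proj2 a i).sub (cont_proj1 a i)).div_const 2
  have h2 : Continuous (dmin hn hk : Pr n k → ℝ) := by
    refine cont_inf' _ ?_ _
    rintro ⟨a, b⟩
    by_cases hab : a = b
    · simpa [hab] using continuous_const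
    · have : Continuous fun c : Pr n k =>
          Finset.univ.sup' (haveI : Nonempty (Fin n) := ⟨⟨0, hn⟩⟩; Finset.univ_nonempty)
            (fun i : Fin n => |ctr c a i - ctr c b i|) := by
        refine cont_sup' _ ?_ _
        intro i
        have hca : Continuous fun c : Pr n k => ctr c a i :=
          ((cont_proj1 a i).add (cont_proj2 a i)).div_const 2
        have hcb : Continuous fun c : Pr n k => ctr c b i :=
          ((cont_proj1 b i).add (cont_proj2 b i)).div_const 2
        exact (hca.sub hcb).abs
      simpa [hab] using this
  exact (continuous_const.mul ((h1.min (h2.div_const _)))).congr (fun c => rfl)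

lemma cont_phi : Continuous fun p : ℝ × Pr n k => phi hn hk p.1 p.2 := by
  have he : Continuous fun p : ℝ × Pr n k => eps hn hk p.2 :=
    (cont_eps hn hk).comp continuous_snd
  have ht : Continuous fun p : ℝ × Pr n k => p.1 := continuous_fst
  refine Continuous.prodMk ?_ ?_ <;> refine continuous_pi fun a => continuous_pi fun i => ?_
  · have hu : Continuous fun p : ℝ × Pr n k => p.2.1 a i :=
      (cont_proj1 a i).comp continuous_snd
    have hv : Continuous fun p : ℝ × Pr n k => p.2.2 a i :=
      (cont_proj2 a i).comp continuous_snd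
    exact ((continuous_const.sub ht).mul hu).add
      (ht.mul ((((hu.add hv)).div_const 2).sub he))
  · have hu : Continuous fun p : ℝ × Pr n k => p.2.1 a i :=
      (cont_proj1 a i).comp continuous_snd
    have hv : Continuous fun p : ℝ × Pr n k => p.2.2 a i :=
      (cont_proj2 a i).comp continuous_snd
    exact ((continuous_const.sub ht).mul hv).add
      (ht.mul ((((hu.add hv)).div_const 2).add he))

end MilgramAux


open MilgramAux

/-- STATEMENT 9: the inclusion of the subspace of Milgram decomposable configurations
of `k` little `n`-cubes into `𝒞ₙ(k)` is a homotopy equivalence. -/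
theorem milgram_decomposables_homotopy_equiv (n k : ℕ) (hn : 1 ≤ n) (hk : 1 ≤ k) :
    ∃ e : ContinuousMap.HomotopyEquiv
        {c : (Fin k → Fin n → ℝ) × (Fin k → Fin n → ℝ) |
          IsConfig n k c ∧ MDecomp n k c 0 Finset.univ}
        {c : (Fin k → Fin n → ℝ) × (Fin k → Fin n → ℝ) | IsConfig n k c},
      ∀ x, (e.toFun x : (Fin k → Fin n → ℝ) × (Fin k → Fin n → ℝ)) =
        (x : (Fin k → Fin n → ℝ) × (Fin k → Fin n → ℝ)) := by
  classical
  set D : Set (Pr n k) := {c | IsConfig n k c ∧ MDecomp n k c 0 Finset.univ} with hD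
  set X : Set (Pr n k) := {c | IsConfig n k c} with hX
  have h10 : (0:ℝ) ≤ 1 := zero_le_one
  -- the inclusion
  let incl : C(D, X) := ⟨fun d => ⟨d.1, d.2.1⟩, continuous_subtype_val.subtype_mk _⟩
  -- the retraction onto decomposables
  let retr : C(X, D) :=
    ⟨fun x => ⟨phi hn hk 1 x.1,
        ⟨isConfig_phi hn hk x.2 h10 le_rfl, mdecomp_phi_one hn hk x.2⟩⟩,
      (((cont_phi hn hk).comp
        (continuous_const.prodMk continuous_subtype_val)).subtype_mk _)⟩
  have hcontH : Continuous fun p : unitInterval × X => phi hn hk (1 - (p.1 : ℝ)) p.2.1 :=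
    (cont_phi hn hk).comp
      ((continuous_const.sub (continuous_subtype_val.comp continuous_fst)).prodMk
        (continuous_subtype_val.comp continuous_snd))
  have ht0 : ∀ t : unitInterval, (0:ℝ) ≤ 1 - (t : ℝ) := fun t => by linarith [t.2.2]
  have ht1 : ∀ t : unitInterval, 1 - (t : ℝ) ≤ 1 := fun t => by linarith [t.2.1]
  -- homotopy on the big space
  let FX : ContinuousMap.Homotopy (incl.comp retr) (ContinuousMap.id X) :=
    { toFun := fun p => ⟨phi hn hk (1 - (p.1 : ℝ)) p.2.1,
        isConfig_phi hn hk p.2.2 (ht0 p.1) (ht1 p.1)⟩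
      continuous_toFun := hcontH.subtype_mk _
      map_zero_left := fun x => Subtype.ext (by norm_num; rfl)
      map_one_left := fun x => Subtype.ext (by norm_num [phi_zero hn hk]) }
  have hcontH' : Continuous fun p : unitInterval × D => phi hn hk (1 - (p.1 : ℝ)) p.2.1 :=
    (cont_phi hn hk).comp
      ((continuous_const.sub (continuous_subtype_val.comp continuous_fst)).prodMk
        (continuous_subtype_val.comp continuous_snd))
  -- homotopy on the decomposable subspace
  let FD : ContinuousMap.Homotopy (retr.comp incl) (ContinuousMap.id D) :=
    { toFun := fun p => ⟨phi hn hk (1 - (p.1 : ℝ)) p.2.1,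
        ⟨isConfig_phi hn hk p.2.2.1 (ht0 p.1) (ht1 p.1),
          mdecomp_phi hn hk p.2.2.1 (ht0 p.1) (ht1 p.1) p.2.2.2⟩⟩
      continuous_toFun := hcontH'.subtype_mk _
      map_zero_left := fun d => Subtype.ext (by norm_num; rfl)
      map_one_left := fun d => Subtype.ext (by norm_num [phi_zero hn hk]) }
  exact ⟨⟨incl, retr, ⟨FD⟩, ⟨FX⟩⟩, fun x => rfl⟩
end

section
/- A configuration (u,v) ∈ 𝒞ₙ(k) is decomposable if and only if there exists an (n, Fin k)-expression A such that v a i ≤ u b i whenever a□ᵢb in A; that is, the union of the subspaces G(A) over all (n, Fin k)-expressions A equals the subspace 𝒟ₙ(k) of decomposable configurations. -/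
/-- Formal `(n, Fin k)`-expressions: binary trees whose leaves are labeled by
generators and whose internal nodes are labeled by one of the `n` operations.
Expressions are considered up to the strict associativity of each operation,
via the relation `W.equiv` below. -/
inductive W (n k : ℕ) : Type
  | leaf : Fin k → W n k
  | node : Fin n → W n k → W n k → W n k

namespace W

variable {n k : ℕ}

/-- The list of leaf labels, from left to right. -/
def leaves : W n k → List (Fin k)
  | leaf a => [a]
  | node _ A B => A.leaves ++ B.leaves

/-- `A.Exact T`: the expression `A` uses each element of `T` exactly once and
no other generators. -/
def Exact (A : W n k) (T : Finset (Fin k)) : Prop :=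
  A.leaves.Nodup ∧ A.leaves.toFinset = T

/-- `A.inRel a b i` means `a □ᵢ b` in `A`: the lowest common "ancestor" node of the
leaves `a` and `b` carries the operation `i`, with `a` to the left of `b`. -/
def inRel : W n k → Fin k → Fin k → Fin n → Prop
  | leaf _, _, _, _ => False
  | node j A B, a, b, i => A.inRel a b i ∨ B.inRel a b i ∨ (j = i ∧ a ∈ A.leaves ∧ b ∈ B.leaves)

/-- The order relation of the poset `M̂ₙ`: `A ≤ B` iff whenever `a □ᵢ b` in `A`,
either `a □ⱼ b` in `B` for some `j ≥ i`, or `b □ⱼ a` in `B` for some `j > i`. -/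
def le (A B : W n k) : Prop :=
  ∀ a b : Fin k, a ≠ b → ∀ i : Fin n, A.inRel a b i →
    ∃ j : Fin n, (i ≤ j ∧ B.inRel a b j) ∨ (i < j ∧ B.inRel b a j)

/-- One step of the associativity/congruence relation on expressions. -/
inductive Step : W n k → W n k → Prop
  | assoc (i : Fin n) (A B C : W n k) :
      Step (node i (node i A B) C) (node i A (node i B C))
  | congr_left (i : Fin n) {A A' : W n k} (B : W n k) :
      Step A A' → Step (node i A B) (node i A' B)
  | congr_right (i : Fin n) (A : W n k) {B B' : W n k} :
      Step B B' → Step (node i A B) (node i A B')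

/-- Equality of expressions (strict associativity of each operation). -/
def equiv (A B : W n k) : Prop := Relation.EqvGen Step A B

/-- Restriction of an expression to the leaves satisfying `p`
(`none` if no leaf survives). -/
def restrict : W n k → (Fin k → Bool) → Option (W n k)
  | leaf a, p => if p a then some (leaf a) else none
  | node i A B, p =>
    match A.restrict p, B.restrict p with
    | some A', some B' => some (node i A' B')
    | some A', none => some A'
    | none, o => o

end W

/-- Joining two possibly-empty expressions by the operation `i`, with the convention
that the empty expression is a unit. -/
def onode {n k : ℕ} (i : Fin n) : Option (W n k) → Option (W n k) → Option (W n k)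
  | some A, some B => some (W.node i A B)
  | some A, none => some A
  | none, o => o

/-- Equality of possibly-empty expressions. -/
def OEquiv {n k : ℕ} : Option (W n k) → Option (W n k) → Prop
  | none, none => True
  | some A, some B => A.equiv B
  | _, _ => False

/-- `A − T`: the expression `A` with the leaves belonging to `T` deleted. -/
def diffR {n k : ℕ} (A : W n k) (T : Finset (Fin k)) : Option (W n k) :=
  A.restrict fun a => decide (a ∉ T)

/-- `G(A)`: the configurations whose cubes are separated as prescribed by the
expression `A`. -/
def Gset (n k : ℕ) (A : W n k) : Set ((Fin k → Fin n → ℝ) × (Fin k → Fin n → ℝ)) :=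
  {c | IsConfig n k c ∧ ∀ a b i, A.inRel a b i → c.2 a i ≤ c.1 b i}

/-- `F(A) = ⋃_{X ≤ A} G(X)`, the union over all expressions `X` on the full set of
generators mapping into `A` in the poset `M̂ₙ(Fin k)`. -/
def Fset (n k : ℕ) (A : W n k) : Set ((Fin k → Fin n → ℝ) × (Fin k → Fin n → ℝ)) :=
  ⋃ (X : W n k) (_ : X.Exact Finset.univ ∧ X.le A), Gset n k X

/-! The root `A □ᵢ B` of an expression is exactly one splitting step
`S = leaves A ⊔ leaves B` of a decomposition along coordinate `i`, so decompositions
and expressions translate into each other by structural induction. -/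

namespace W

variable {n k : ℕ} {c : (Fin k → Fin n → ℝ) × (Fin k → Fin n → ℝ)}

def Separates (A : W n k) (c : (Fin k → Fin n → ℝ) × (Fin k → Fin n → ℝ)) : Prop :=
  ∀ a b i, A.inRel a b i → c.2 a i ≤ c.1 b i

lemma leaves_ne_nil (A : W n k) : A.leaves ≠ [] := by
  cases A <;> simp [leaves, leaves_ne_nil]

lemma leaves_toFinset_nonempty (A : W n k) : A.leaves.toFinset.Nonempty :=
  List.toFinset_nonempty_iff _ |>.mpr A.leaves_ne_nil

lemma exact_leaves_toFinset {A : W n k} (h : A.leaves.Nodup) : A.Exact A.leaves.toFinset :=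
  ⟨h, rfl⟩

lemma Exact.node {A B : W n k} {S T : Finset (Fin k)} (hA : A.Exact S) (hB : B.Exact T)
    (hST : Disjoint S T) (i : Fin n) : (node i A B).Exact (S ∪ T) := by
  obtain ⟨hA, rfl⟩ := hA
  obtain ⟨hB, rfl⟩ := hB
  refine ⟨List.nodup_append.mpr ⟨hA, hB, ?_⟩, by simp [leaves]⟩
  rintro a ha _ hb rfl
  exact Finset.disjoint_left.mp hST (List.mem_toFinset.mpr ha) (List.mem_toFinset.mpr hb)

lemma Separates.left {i : Fin n} {A B : W n k} (h : (node i A B).Separates c) :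
    A.Separates c :=
  fun a b j hab => h a b j (Or.inl hab)

lemma Separates.right {i : Fin n} {A B : W n k} (h : (node i A B).Separates c) :
    B.Separates c :=
  fun a b j hab => h a b j (Or.inr (Or.inl hab))

lemma Separates.root {i : Fin n} {A B : W n k} (h : (node i A B).Separates c) :
    ∀ a ∈ A.leaves.toFinset, ∀ b ∈ B.leaves.toFinset, c.2 a i ≤ c.1 b i :=
  fun a ha b hb =>
    h a b i (Or.inr (Or.inr ⟨rfl, List.mem_toFinset.mp ha, List.mem_toFinset.mp hb⟩))

lemma Separates.node {i : Fin n} {A B : W n k} (hA : A.Separates c) (hB : B.Separates c)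
    (hi : ∀ a ∈ A.leaves, ∀ b ∈ B.leaves, c.2 a i ≤ c.1 b i) : (node i A B).Separates c := by
  rintro a b j (hab | hab | ⟨rfl, ha, hb⟩)
  exacts [hA a b j hab, hB a b j hab, hi a ha b hb]

end W

open W

section

variable {n k : ℕ} {c : (Fin k → Fin n → ℝ) × (Fin k → Fin n → ℝ)}

lemma Decomp.of_separates {A : W n k} {S : Finset (Fin k)} (hA : A.Exact S)
    (hsep : A.Separates c) : Decomp n k c S := by
  induction A generalizing S with
  | leaf a =>
    obtain ⟨-, rfl⟩ := hA
    exact Decomp.small _ (by simp [leaves])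
  | node i A B ihA ihB =>
    obtain ⟨hnd, rfl⟩ := hA
    obtain ⟨hndA, hndB, hAB⟩ := List.nodup_append.mp hnd
    refine Decomp.split _ _ _ i A.leaves_toFinset_nonempty B.leaves_toFinset_nonempty ?_
      (by simp [leaves]) hsep.root (ihA (exact_leaves_toFinset hndA) hsep.left)
      (ihB (exact_leaves_toFinset hndB) hsep.right)
    exact Finset.disjoint_left.mpr fun a ha hb =>
      hAB a (List.mem_toFinset.mp ha) a (List.mem_toFinset.mp hb) rfl

lemma Decomp.exists_separates {S : Finset (Fin k)} (h : Decomp n k c S) (hS : S.Nonempty) :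
    ∃ A : W n k, A.Exact S ∧ A.Separates c := by
  induction h with
  | small S hcard =>
    obtain ⟨a, rfl⟩ := Finset.card_eq_one.mp (le_antisymm hcard hS.card_pos)
    exact ⟨leaf a, ⟨List.nodup_singleton a, by simp [leaves]⟩, fun _ _ _ h => h.elim⟩
  | split S S₁ S₂ i h₁ h₂ hd hu hsep _ _ ih₁ ih₂ =>
    obtain ⟨A₁, hA₁, hsep₁⟩ := ih₁ h₁
    obtain ⟨A₂, hA₂, hsep₂⟩ := ih₂ h₂
    refine ⟨node i A₁ A₂, hu ▸ hA₁.node hA₂ hd i, hsep₁.node hsep₂ fun a ha b hb => ?_⟩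
    exact hsep a (hA₁.2 ▸ List.mem_toFinset.mpr ha) b (hA₂.2 ▸ List.mem_toFinset.mpr hb)

end

theorem decomposable_iff_separated_by_expression_general (n k : ℕ) (hk : 1 ≤ k)
    (c : (Fin k → Fin n → ℝ) × (Fin k → Fin n → ℝ)) :
    Decomp n k c Finset.univ ↔
      ∃ A : W n k, A.Exact Finset.univ ∧
        ∀ a b i, A.inRel a b i → c.2 a i ≤ c.1 b i :=
  ⟨fun h => h.exists_separates ⟨⟨0, hk⟩, Finset.mem_univ _⟩,
    fun ⟨_, hA, hsep⟩ => Decomp.of_separates hA hsep⟩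

/-- STATEMENT 10: a configuration is decomposable if and only if it lies in `G(A)` for
some `(n, Fin k)`-expression `A`; i.e. `⋃_A G(A) = 𝒟ₙ(k)`. -/
theorem decomposable_iff_separated_by_expression (n k : ℕ) (hn : 1 ≤ n) (hk : 1 ≤ k)
    (c : (Fin k → Fin n → ℝ) × (Fin k → Fin n → ℝ)) (hc : IsConfig n k c) :
    Decomp n k c Finset.univ ↔
      ∃ A : W n k, A.Exact Finset.univ ∧
        ∀ a b i, A.inRel a b i → c.2 a i ≤ c.1 b i :=
  decomposable_iff_separated_by_expression_general n k hk c
end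

section
/- Let (σ₀,μ₀) ≤ (σ₁,μ₁) ≤ ⋯ ≤ (σ_r,μ_r) be a chain in the poset K^{(n)}(k). Then for every pair of distinct elements a, b of Fin k, the number of indices t < r at which the relative order of a and b changes, i.e., card {t < r : (σ_t⁻¹ a < σ_t⁻¹ b) ≠ (σ_{t+1}⁻¹ a < σ_{t+1}⁻¹ b)}, is at most n − 1. (Consequently the forgetful map (σ,μ) ↦ σ carries the n-th filtration of Berger's complete graph operad into the n-th Smith filtration of the Barratt–Eccles operad.) -/
/-- The order relation of (the `n`-th filtration of) Berger's complete graph operad: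
an element is a permutation `σ` of `Fin k` (directing the edge `{a,b}` from `a` to `b`
iff `σ⁻¹ a < σ⁻¹ b`) together with a coloring `μ` of the edges by colors in `Fin n`. -/
def KLe (n k : ℕ) (x y : Equiv.Perm (Fin k) × (Sym2 (Fin k) → Fin n)) : Prop :=
  ∀ a b : Fin k, a ≠ b → x.1⁻¹ a < x.1⁻¹ b →
    (y.1⁻¹ a < y.1⁻¹ b ∧ x.2 s(a, b) ≤ y.2 s(a, b)) ∨
    (y.1⁻¹ b < y.1⁻¹ a ∧ x.2 s(a, b) < y.2 s(a, b))

/-- STATEMENT 17: along any chain in `K^{(n)}(k)` the relative order of any fixed pair of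
distinct elements changes at most `n − 1` times; hence the forgetful map lands in the
`n`-th Smith filtration of the Barratt–Eccles operad. -/
theorem chain_order_changes_le (n k : ℕ) (hn : 1 ≤ n) (hk : 1 ≤ k) (r : ℕ)
    (c : Fin (r + 1) → Equiv.Perm (Fin k) × (Sym2 (Fin k) → Fin n))
    (hc : ∀ t : Fin r, KLe n k (c t.castSucc) (c t.succ)) :
    ∀ a b : Fin k, a ≠ b →
      (Finset.univ.filter fun t : Fin r =>
        ¬ (((c t.castSucc).1⁻¹ a < (c t.castSucc).1⁻¹ b) ↔
            ((c t.succ).1⁻¹ a < (c t.succ).1⁻¹ b))).card ≤ n - 1 := by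
  intro a b hab
  set μ : Fin (r + 1) → Fin n := fun i => (c i).2 s(a, b) with hμ
  -- step lemma: the color of the edge weakly increases, strictly at flips
  have hstep : ∀ t : Fin r,
      (μ t.castSucc ≤ μ t.succ) ∧
      (¬ (((c t.castSucc).1⁻¹ a < (c t.castSucc).1⁻¹ b) ↔
          ((c t.succ).1⁻¹ a < (c t.succ).1⁻¹ b)) → μ t.castSucc < μ t.succ) := by
    intro t
    rcases lt_trichotomy ((c t.castSucc).1⁻¹ a) ((c t.castSucc).1⁻¹ b) with h1 | h1 | h1
    · rcases hc t a b hab h1 with ⟨h2, h3⟩ | ⟨h2, h3⟩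
      · exact ⟨h3, fun hf => absurd (iff_of_true h1 h2) hf⟩
      · exact ⟨h3.le, fun _ => h3⟩
    · exact absurd (Equiv.injective _ h1) hab
    · have h1' : (c t.castSucc).1⁻¹ b < (c t.castSucc).1⁻¹ a := h1
      have hsw : s(b, a) = s(a, b) := Sym2.eq_swap
      rcases hc t b a hab.symm h1' with ⟨h2, h3⟩ | ⟨h2, h3⟩
      · rw [hsw] at h3
        exact ⟨h3, fun hf => absurd (iff_of_false (asymm h1') (asymm h2)) hf⟩
      · rw [hsw] at h3
        exact ⟨h3.le, fun _ => h3⟩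
  have hmono : Monotone μ := Fin.monotone_iff_le_succ.2 fun t => (hstep t).1
  set S := Finset.univ.filter fun t : Fin r =>
      ¬ (((c t.castSucc).1⁻¹ a < (c t.castSucc).1⁻¹ b) ↔
          ((c t.succ).1⁻¹ a < (c t.succ).1⁻¹ b)) with hS
  have hlt : ∀ t ∈ S, μ t.castSucc < μ t.succ := fun t ht =>
    (hstep t).2 (Finset.mem_filter.1 ht).2
  have hmaps : ∀ t ∈ S, ((μ t.succ : ℕ)) ∈ Finset.Ico 1 n := by
    intro t ht
    have h := Fin.lt_def.1 (hlt t ht)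
    exact Finset.mem_Ico.2 ⟨by omega, (μ t.succ).2⟩
  have key : ∀ t t' : Fin r, t' ∈ S → t < t' → ((μ t.succ : ℕ)) < ((μ t'.succ : ℕ)) := by
    intro t t' ht' hlt'
    have h1 : μ t.succ ≤ μ t'.castSucc := by
      apply hmono
      simp only [Fin.le_def, Fin.lt_def, Fin.val_succ, Fin.coe_castSucc] at hlt' ⊢
      omega
    exact Fin.lt_def.1 (lt_of_le_of_lt h1 (hlt t' ht'))
  have hinj : Set.InjOn (fun t : Fin r => ((μ t.succ : ℕ))) S := by
    intro t ht t' ht' h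
    by_contra hne
    rcases Ne.lt_or_gt hne with hl | hl
    · exact absurd h (Nat.ne_of_lt (key t t' ht' hl))
    · exact absurd h.symm (Nat.ne_of_lt (key t' t ht hl))
  calc S.card ≤ (Finset.Ico 1 n).card :=
        Finset.card_le_card_of_injOn _ hmaps hinj
    _ = n - 1 := by rw [Nat.card_Ico]
end
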